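/- Suppose Σ_X is symmetric positive definite and satisfies the fixed-point equation Σ_X = Σ₀ + α (Σ_j λ_j M_j^T M_j)(Σ₀⁻¹Σ_X)⁻¹ with M_j = Σ_X(Σ_X + Σ_N_j)⁻¹Σ_N_j and α ∈ ℝ. Then Σ_X⁻¹ = Σ₀⁻¹ − α Σ_j λ_j W_j^T W_j, where W_j = Σ_N_j(Σ_X + Σ_N_j)⁻¹. -/
import Mathlib


open Matrix

theorem fixed_point_inverse_relation (K J : ℕ)
    (S0 SX : Matrix (Fin K) (Fin K) ℝ) (h0 : S0.PosDef) (hX : SX.PosDef)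
    (SN : Fin J → Matrix (Fin K) (Fin K) ℝ) (hSN : ∀ j, (SN j).PosDef)
    (l : Fin J → ℝ) (hl : ∀ j, 0 < l j) (α : ℝ)
    (W : Fin J → Matrix (Fin K) (Fin K) ℝ)
    (hW : ∀ j, W j = SN j * (SX + SN j)⁻¹)
    (M : Fin J → Matrix (Fin K) (Fin K) ℝ)
    (hM : ∀ j, M j = SX * (SX + SN j)⁻¹ * SN j)
    (hfix : SX = S0 + α • ((∑ j, l j • ((M j)ᵀ * M j)) * (S0⁻¹ * SX)⁻¹)) :
    SX⁻¹ = S0⁻¹ - α • ∑ j, l j • ((W j)ᵀ * W j) := by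
  have hdX : IsUnit SX.det := isUnit_iff_ne_zero.mpr hX.det_pos.ne'
  have hd0 : IsUnit S0.det := isUnit_iff_ne_zero.mpr h0.det_pos.ne'
  have hdSum : ∀ j, IsUnit (SX + SN j).det := fun j =>
    isUnit_iff_ne_zero.mpr ((hX.add (hSN j)).det_pos.ne')
  have hXs : SXᵀ = SX := hX.1
  -- key identity : M j = W j * SX
  have hM' : ∀ j, M j = W j * SX := by
    intro j
    have h1 : (SX + SN j) * (SX + SN j)⁻¹ = 1 := mul_nonsing_inv _ (hdSum j)
    have h2 : (SX + SN j)⁻¹ * (SX + SN j) = 1 := nonsing_inv_mul _ (hdSum j)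
    rw [hM, hW]
    calc SX * (SX + SN j)⁻¹ * SN j
        = ((SX + SN j) - SN j) * ((SX + SN j)⁻¹ * SN j) := by
          rw [add_sub_cancel_right, mul_assoc]
      _ = SN j - SN j * ((SX + SN j)⁻¹ * SN j) := by
          rw [sub_mul, ← mul_assoc, h1, one_mul]
      _ = SN j * ((SX + SN j)⁻¹ * ((SX + SN j) - SN j)) := by
          rw [mul_sub ((SX + SN j)⁻¹), h2, mul_sub, mul_one]
      _ = SN j * (SX + SN j)⁻¹ * SX := by
          rw [add_sub_cancel_right, ← mul_assoc]
  -- rewrite the inverse in hfix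
  have hinv : (S0⁻¹ * SX)⁻¹ = SX⁻¹ * S0 := by
    rw [Matrix.mul_inv_rev, Matrix.nonsing_inv_nonsing_inv _ hd0]
  rw [hinv] at hfix
  set T : Matrix (Fin K) (Fin K) ℝ := ∑ j, l j • ((M j)ᵀ * M j) with hT
  have h3 : SX⁻¹ * SX = 1 := nonsing_inv_mul _ hdX
  have h5 : SX * SX⁻¹ = 1 := mul_nonsing_inv _ hdX
  have h4 : S0 * S0⁻¹ = 1 := mul_nonsing_inv _ hd0
  -- conjugate the fixed-point equation
  have key : S0⁻¹ = SX⁻¹ + α • (SX⁻¹ * T * SX⁻¹) := by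
    calc S0⁻¹ = SX⁻¹ * SX * S0⁻¹ := by rw [h3, one_mul]
    _ = SX⁻¹ * (S0 + α • (T * (SX⁻¹ * S0))) * S0⁻¹ := by rw [← hfix]
    _ = SX⁻¹ * S0 * S0⁻¹ + α • (SX⁻¹ * (T * (SX⁻¹ * S0)) * S0⁻¹) := by
        rw [mul_add, add_mul, mul_smul_comm, smul_mul_assoc]
    _ = SX⁻¹ + α • (SX⁻¹ * T * SX⁻¹) := by
        rw [mul_assoc SX⁻¹ S0, h4, mul_one,
          show SX⁻¹ * (T * (SX⁻¹ * S0)) * S0⁻¹ = SX⁻¹ * T * SX⁻¹ * (S0 * S0⁻¹) from by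
            noncomm_ring, h4, mul_one]
  -- compute SX⁻¹ * T * SX⁻¹
  have hTW : SX⁻¹ * T * SX⁻¹ = ∑ j, l j • ((W j)ᵀ * W j) := by
    rw [hT, Finset.mul_sum, Finset.sum_mul]
    refine Finset.sum_congr rfl fun j _ => ?_
    rw [mul_smul_comm, smul_mul_assoc]
    congr 1
    have hMT : (M j)ᵀ = SX * (W j)ᵀ := by
      rw [hM' j, transpose_mul, hXs]
    calc SX⁻¹ * ((M j)ᵀ * M j) * SX⁻¹
        = (SX⁻¹ * SX) * (W j)ᵀ * (W j * (SX * SX⁻¹)) := by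
          rw [hMT, hM' j]; noncomm_ring
    _ = (W j)ᵀ * W j := by rw [h3, h5, one_mul, mul_one]
  rw [hTW] at key
  rw [key]; abel
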